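/- Let K be a commutative ring, A and B associative K-algebras, M an A-bimodule and N a B-bimodule. Define Q_A(M) = M / span{am − ma : a ∈ A, m ∈ M}. Then the identity on M ⊗_K N induces a natural isomorphism of K-modules Q_A(M) ⊗_K Q_B(N) ≅ Q_{A⊗B}(M ⊗ N), where M ⊗ N is a bimodule over A ⊗_K B in the evident way. -/

import Mathlib

open TensorProduct

variable (K : Type) [CommRing K]

section
variable {A : Type} [Ring A] [Algebra K A] {M : Type} [AddCommGroup M] [Module K M]

/-- For a bimodule (given by commuting left and right actions `actL`, `actR` of `A`
on `M`), `Q_A(M)` is the quotient of `M` by the sub-`K`-module generated by the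
commutators `a • m − m • a`. -/
def commSub (actL actR : A →ₗ[K] M →ₗ[K] M) : Submodule K M :=
  Submodule.span K {v | ∃ (a : A) (m : M), v = actL a m - actR a m}

/-- `Q_A(M) = M / span{am − ma}`. -/
def Q (actL actR : A →ₗ[K] M →ₗ[K] M) : Type _ := M ⧸ commSub K actL actR

instance (actL actR : A →ₗ[K] M →ₗ[K] M) : AddCommGroup (Q K actL actR) := by
  unfold Q; infer_instance

instance (actL actR : A →ₗ[K] M →ₗ[K] M) : Module K (Q K actL actR) := by
  unfold Q; infer_instance

/-- The projection `M → Q_A(M)`. -/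
def Qmk (actL actR : A →ₗ[K] M →ₗ[K] M) : M →ₗ[K] Q K actL actR :=
  Submodule.mkQ _

end

variable {A B : Type} [Ring A] [Algebra K A] [Ring B] [Algebra K B]
  {M : Type} [AddCommGroup M] [Module K M] {N : Type} [AddCommGroup N] [Module K N]

/-- The induced action of `A ⊗[K] B` on `M ⊗[K] N`: `(a ⊗ b) • (m ⊗ n) = (a • m) ⊗ (b • n)`. -/
noncomputable def tensorAct (actA : A →ₗ[K] M →ₗ[K] M) (actB : B →ₗ[K] N →ₗ[K] N) :
    (A ⊗[K] B) →ₗ[K] (M ⊗[K] N) →ₗ[K] (M ⊗[K] N) :=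
  TensorProduct.lift (((TensorProduct.mapBilinear (RingHom.id K) M N M N).comp actA).compl₂ actB)

/-!
By right exactness of `⊗`, `Q_A(M) ⊗ Q_B(N)` is the quotient of `M ⊗ N` by
`C_A ⊗ N + M ⊗ C_B`, where `C_A, C_B` are the commutator submodules; so it suffices that this
submodule is the commutator submodule of `M ⊗ N`. One inclusion is the identity
`am ⊗ bn − ma ⊗ nb = am ⊗ (bn − nb) + (am − ma) ⊗ nb`; for the other, `(am − ma) ⊗ n` and
`m ⊗ (bn − nb)` are the commutators of `m ⊗ n` with `a ⊗ 1` and `1 ⊗ b`.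
-/

section
variable {K}

lemma sub_mem_commSub (actL actR : A →ₗ[K] M →ₗ[K] M) (a : A) (m : M) :
    actL a m - actR a m ∈ commSub K actL actR :=
  Submodule.subset_span ⟨a, m, rfl⟩

@[simp]
lemma tensorAct_tmul (actA : A →ₗ[K] M →ₗ[K] M) (actB : B →ₗ[K] N →ₗ[K] N)
    (a : A) (b : B) (m : M) (n : N) :
    tensorAct K actA actB (a ⊗ₜ b) (m ⊗ₜ n) = actA a m ⊗ₜ actB b n := by
  simp [tensorAct]

variable (lA rA : A →ₗ[K] M →ₗ[K] M) (lB rB : B →ₗ[K] N →ₗ[K] N)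

lemma range_map_subtype_id_le_commSub_tensorAct (hlB1 : ∀ n, lB 1 n = n)
    (hrB1 : ∀ n, rB 1 n = n) :
    LinearMap.range (map (commSub K lA rA).subtype (LinearMap.id : N →ₗ[K] N)) ≤
      commSub K (tensorAct K lA lB) (tensorAct K rA rB) := by
  have tmul_mem (n : N) : commSub K lA rA ≤
      (commSub K (tensorAct K lA lB) (tensorAct K rA rB)).comap ((mk K M N).flip n) := by
    refine Submodule.span_le.mpr ?_
    rintro _ ⟨a, m, rfl⟩
    simpa [sub_tmul, hlB1, hrB1] using
      sub_mem_commSub (tensorAct K lA lB) (tensorAct K rA rB) (a ⊗ₜ 1) (m ⊗ₜ n)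
  rw [LinearMap.range_le_iff_comap, eq_top_iff, ← span_tmul_eq_top, Submodule.span_le]
  rintro _ ⟨s, n, rfl⟩
  exact tmul_mem n s.2

lemma range_map_id_subtype_le_commSub_tensorAct (hlA1 : ∀ m, lA 1 m = m)
    (hrA1 : ∀ m, rA 1 m = m) :
    LinearMap.range (map (LinearMap.id : M →ₗ[K] M) (commSub K lB rB).subtype) ≤
      commSub K (tensorAct K lA lB) (tensorAct K rA rB) := by
  have tmul_mem (m : M) : commSub K lB rB ≤
      (commSub K (tensorAct K lA lB) (tensorAct K rA rB)).comap (mk K M N m) := by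
    refine Submodule.span_le.mpr ?_
    rintro _ ⟨b, n, rfl⟩
    simpa [tmul_sub, hlA1, hrA1] using
      sub_mem_commSub (tensorAct K lA lB) (tensorAct K rA rB) (1 ⊗ₜ b) (m ⊗ₜ n)
  rw [LinearMap.range_le_iff_comap, eq_top_iff, ← span_tmul_eq_top, Submodule.span_le]
  rintro _ ⟨m, s, rfl⟩
  exact tmul_mem m s.2

lemma commSub_tensorAct_le_sup_range :
    commSub K (tensorAct K lA lB) (tensorAct K rA rB) ≤
      LinearMap.range (map (commSub K lA rA).subtype LinearMap.id) ⊔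
        LinearMap.range (map LinearMap.id (commSub K lB rB).subtype) := by
  set S := LinearMap.range (map (commSub K lA rA).subtype LinearMap.id) ⊔
    LinearMap.range (map LinearMap.id (commSub K lB rB).subtype)
  have commutator_tmul_mem (a : A) (b : B) (m : M) (n : N) :
      lA a m ⊗ₜ lB b n - rA a m ⊗ₜ rB b n ∈ S := by
    rw [show lA a m ⊗ₜ lB b n - rA a m ⊗ₜ rB b n
        = lA a m ⊗ₜ (lB b n - rB b n) + (lA a m - rA a m) ⊗ₜ rB b n by
      rw [tmul_sub, sub_tmul]; abel]
    exact add_mem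
      (Submodule.mem_sup_right ⟨lA a m ⊗ₜ ⟨_, sub_mem_commSub lB rB b n⟩, rfl⟩)
      (Submodule.mem_sup_left ⟨⟨_, sub_mem_commSub lA rA a m⟩ ⊗ₜ rB b n, rfl⟩)
  refine Submodule.span_le.mpr ?_
  rintro _ ⟨x, t, rfl⟩
  rw [SetLike.mem_coe]
  induction x using TensorProduct.induction_on with
  | zero => simp
  | add x y hx hy =>
    simpa only [map_add, LinearMap.add_apply, add_sub_add_comm] using add_mem hx hy
  | tmul a b =>
    induction t using TensorProduct.induction_on with
    | zero => simp
    | add s t hs ht => simpa only [map_add, add_sub_add_comm] using add_mem hs ht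
    | tmul m n => simpa using commutator_tmul_mem a b m n

lemma commSub_tensorAct_eq (hlA1 : ∀ m, lA 1 m = m) (hrA1 : ∀ m, rA 1 m = m)
    (hlB1 : ∀ n, lB 1 n = n) (hrB1 : ∀ n, rB 1 n = n) :
    commSub K (tensorAct K lA lB) (tensorAct K rA rB) =
      LinearMap.range (map (commSub K lA rA).subtype LinearMap.id) ⊔
        LinearMap.range (map LinearMap.id (commSub K lB rB).subtype) :=
  le_antisymm (commSub_tensorAct_le_sup_range lA rA lB rB)
    (sup_le (range_map_subtype_id_le_commSub_tensorAct lA rA lB rB hlB1 hrB1)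
      (range_map_id_subtype_le_commSub_tensorAct lA rA lB rB hlA1 hrA1))

end

theorem Q_tensor_iso (lA rA : A →ₗ[K] M →ₗ[K] M) (lB rB : B →ₗ[K] N →ₗ[K] N)
    (hlA1 : ∀ m, lA 1 m = m) (hrA1 : ∀ m, rA 1 m = m)
    (hlB1 : ∀ n, lB 1 n = n) (hrB1 : ∀ n, rB 1 n = n) :
    ∃ e : (Q K lA rA) ⊗[K] (Q K lB rB) ≃ₗ[K] Q K (tensorAct K lA lB) (tensorAct K rA rB),
      ∀ (m : M) (n : N),
        e (Qmk K lA rA m ⊗ₜ[K] Qmk K lB rB n)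
          = Qmk K (tensorAct K lA lB) (tensorAct K rA rB) (m ⊗ₜ[K] n) :=
  ⟨(quotientTensorQuotientEquiv _ _).trans
      (Submodule.quotEquivOfEq _ _ (commSub_tensorAct_eq lA rA lB rB hlA1 hrA1 hlB1 hrB1).symm),
    fun _ _ => rfl⟩
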